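/- For every tree T on 2^{<ω} with μ(Lim T) = a > 0 and every ε > 0 there is N ∈ ω such that for every n ≥ N there is a set t ⊆ 2^n ∩ T with |t| ≥ 2^n(a − ε) and such that for each η ∈ t, μ(Lim(T^{[η]})) > 2^{−n}(1 − ε). -/

import Mathlib

open MeasureTheory Pointwise

/-- Cantor space `2^ω` with componentwise addition mod 2. -/
abbrev Cantor : Type := ℕ → ZMod 2
/-- Finite binary sequences, the nodes of `2^{<ω}`. -/
abbrev FinSeq : Type := List (ZMod 2)

instance : TopologicalSpace (ZMod 2) := ⊥
instance : DiscreteTopology (ZMod 2) := ⟨rfl⟩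
noncomputable instance : MeasurableSpace Cantor := borel Cantor
instance : BorelSpace Cantor := ⟨rfl⟩

/-- The uniform (Lebesgue) product measure on `2^ω`, realized as the Haar measure of the
compact group `2^ω` normalized so that the whole space has measure 1. -/
noncomputable def μC : Measure Cantor := Measure.addHaarMeasure ⊤

/-- `X` is null-additive: `X + A` is null for every null `A`. -/
def NullAdditive (X : Set Cantor) : Prop := ∀ A : Set Cantor, μC A = 0 → μC (X + A) = 0

/-- `X` is meager-additive: `X + A` is meager for every meager `A`. -/
def MeagerAdditive (X : Set Cantor) : Prop := ∀ A : Set Cantor, IsMeagre A → IsMeagre (X + A)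

/-- A tree on `2^{<ω}`: nonempty, closed under initial segments, and every node has
extensions in the tree of every greater length. -/
def IsTree (T : Set FinSeq) : Prop :=
  T.Nonempty ∧ (∀ σ τ : FinSeq, σ <+: τ → τ ∈ T → σ ∈ T) ∧
    ∀ σ ∈ T, ∀ n, σ.length < n → ∃ τ ∈ T, σ <+: τ ∧ τ.length = n

/-- Restriction `x↾n` of `x ∈ 2^ω`. -/
def res (x : Cantor) (n : ℕ) : FinSeq := (List.range n).map x

/-- `Lim T = {x ∈ 2^ω : ∀ n, x↾n ∈ T}`. -/
def LimT (T : Set FinSeq) : Set Cantor := {x | ∀ n, res x n ∈ T}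

/-- A nowhere dense tree: every node has an extension outside the tree. -/
def NwdTree (T : Set FinSeq) : Prop := ∀ η ∈ T, ∃ τ : FinSeq, η <+: τ ∧ τ ∉ T

/-- Componentwise mod-2 addition of finite sequences (of the same length). -/
def finAdd : FinSeq → FinSeq → FinSeq := List.zipWith (· + ·)

/-- `T + S = {η + σ : η ∈ T, σ ∈ S, same length}`. -/
def treeSum (T S : Set FinSeq) : Set FinSeq :=
  {ρ | ∃ η ∈ T, ∃ σ ∈ S, η.length = σ.length ∧ ρ = finAdd η σ}

/-- `T^{[η]} = {τ ∈ T : τ ⊑ η or η ⊑ τ}`. -/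
def through (T : Set FinSeq) (η : FinSeq) : Set FinSeq := {τ ∈ T | τ <+: η ∨ η <+: τ}

/-- `A^{fin}`: points agreeing with some point of `A` at all but finitely many coordinates. -/
def finEq (A : Set Cantor) : Set Cantor := {y | ∃ x ∈ A, ∀ᶠ n in Filter.atTop, y n = x n}

/-- `U^{⟨ν⟩} = {τ : ν⌢τ ∈ U}`. -/
def above (U : Set FinSeq) (ν : FinSeq) : Set FinSeq := {τ | ν ++ τ ∈ U}

/-- A corset: a nondecreasing function `ω → ω \ {0}` tending to infinity. -/
def Corset (f : ℕ → ℕ) : Prop :=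
  Monotone f ∧ (∀ n, 0 < f n) ∧ Filter.Tendsto f Filter.atTop Filter.atTop

/-- `S` is of width `f`: `|S ∩ 2^n| ≤ f n` for all `n`. -/
def widthLe (S : Set FinSeq) (f : ℕ → ℕ) : Prop := ∀ n, {τ ∈ S | τ.length = n}.ncard ≤ f n

/-- `S` is almost of width `f`: `|S ∩ 2^n| ≤ f n` for all sufficiently large `n`. -/
def almostWidthLe (S : Set FinSeq) (f : ℕ → ℕ) : Prop :=
  ∀ᶠ n in Filter.atTop, {τ ∈ S | τ.length = n}.ncard ≤ f n

/-!
The clopen sets `limApprox T n = ⋃ {[σ] : σ ∈ T ∩ 2^n}` decrease to `Lim T`, so for large `n`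
the level `T ∩ 2^n` has fewer than `2^n (a + ε²)` nodes. Each node `σ` carries
`μ(Lim T ∩ [σ]) ≤ 2^{-n}`, and these masses add up to `a`. A node violating the required bound
falls short of `2^{-n}` by at least `2^{-n} ε` while the total shortfall is below `ε²`, so by
Markov's inequality fewer than `2^n ε` nodes violate it, leaving at least `2^n (a - ε)` good ones.
-/

open scoped ENNReal

instance : μC.IsAddLeftInvariant := Measure.isAddLeftInvariant_addHaarMeasure ⊤

instance : IsProbabilityMeasure μC :=
  ⟨by simpa [μC, TopologicalSpace.PositiveCompacts.coe_top] using
    Measure.addHaarMeasure_self (K₀ := (⊤ : TopologicalSpace.PositiveCompacts Cantor))⟩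

lemma res_length (x : Cantor) (n : ℕ) : (res x n).length = n := by simp [res]

lemma res_prefix (x : Cantor) {m k : ℕ} (h : m ≤ k) : res x m <+: res x k := by
  rw [show res x m = (res x k).take m by
    rw [res, res, ← List.map_take, List.take_range, min_eq_left h]]
  exact List.take_prefix _ _

def cyl (σ : FinSeq) : Set Cantor := {x | res x σ.length = σ}

lemma mem_cyl_iff {x : Cantor} {σ : FinSeq} : x ∈ cyl σ ↔ ∀ i < σ.length, x i = σ.getD i 0 := by
  simp +contextual [cyl, res, List.ext_getElem_iff]

lemma measurableSet_cyl (σ : FinSeq) : MeasurableSet (cyl σ) := by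
  have hcyl : cyl σ = ⋂ i ∈ Finset.range σ.length, (fun x : Cantor => x i) ⁻¹' {σ.getD i 0} := by
    ext x
    simp [mem_cyl_iff]
  rw [hcyl]
  refine (isClopen_biInter_finset fun i _ => ?_).isOpen.measurableSet
  exact (isClopen_discrete _).preimage (continuous_apply i)

lemma disjoint_cyl {σ τ : FinSeq} (h : σ.length = τ.length) (hne : σ ≠ τ) :
    Disjoint (cyl σ) (cyl τ) :=
  Set.disjoint_left.mpr fun _ hσ hτ => hne (hσ.symm.trans (h ▸ hτ))

lemma muC_cyl_eq_of_length_eq {σ τ : FinSeq} (h : σ.length = τ.length) :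
    μC (cyl σ) = μC (cyl τ) := by
  have htranslate : (fun x => (fun i => τ.getD i 0 - σ.getD i 0) + x) ⁻¹' cyl τ = cyl σ := by
    ext x
    simp only [Set.mem_preimage, mem_cyl_iff, Pi.add_apply, ← h, sub_add_eq_add_sub,
      sub_eq_iff_eq_add, add_left_cancel_iff, eq_comm (a := x _)]
  rw [← htranslate, measure_preimage_add]

lemma muC_cyl (σ : FinSeq) : μC (cyl σ) = (2 : ℝ≥0∞)⁻¹ ^ σ.length := by
  set n := σ.length
  have hcover : (⋃ f : Fin n → ZMod 2, cyl (List.ofFn f)) = Set.univ :=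
    Set.eq_univ_of_forall fun x =>
      Set.mem_iUnion.mpr ⟨fun i => x i, by simp +contextual [mem_cyl_iff]⟩
  have hsum : ∑ _f : Fin n → ZMod 2, μC (cyl σ) = 1 := by
    rw [← measure_univ (μ := μC), ← hcover, measure_iUnion
      (fun f g hfg => disjoint_cyl (by simp) fun e => hfg (List.ofFn_injective e))
      (fun f => measurableSet_cyl _), tsum_fintype]
    exact Finset.sum_congr rfl fun f _ => muC_cyl_eq_of_length_eq (by simp [n])
  rw [Finset.sum_const, Finset.card_univ, nsmul_eq_mul] at hsum
  simp only [Fintype.card_pi, ZMod.card, Finset.prod_const, Finset.card_univ, Fintype.card_fin,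
    Nat.cast_pow, Nat.cast_ofNat] at hsum
  rw [← ENNReal.inv_pow, ← one_div, ENNReal.eq_div_iff (by positivity) (by simp), hsum]

lemma finite_level (T : Set FinSeq) (n : ℕ) : {σ ∈ T | σ.length = n}.Finite :=
  (List.finite_length_eq (ZMod 2) n).subset fun _ h => h.2

def limApprox (T : Set FinSeq) (n : ℕ) : Set Cantor := {x | res x n ∈ T}

lemma limApprox_eq_biUnion (T : Set FinSeq) (n : ℕ) :
    limApprox T n = ⋃ σ ∈ {σ ∈ T | σ.length = n}, cyl σ := by
  ext x
  simp only [limApprox, cyl, Set.mem_ofPred_eq, Set.mem_iUnion, exists_prop]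
  constructor
  · exact fun hx => ⟨res x n, ⟨hx, res_length x n⟩, by rw [res_length]⟩
  · rintro ⟨σ, ⟨hσT, rfl⟩, hx⟩
    rwa [hx]

lemma measurableSet_limApprox (T : Set FinSeq) (n : ℕ) : MeasurableSet (limApprox T n) := by
  rw [limApprox_eq_biUnion]
  exact (finite_level T n).measurableSet_biUnion fun σ _ => measurableSet_cyl σ

lemma antitone_limApprox {T : Set FinSeq} (hT : ∀ σ τ : FinSeq, σ <+: τ → τ ∈ T → σ ∈ T) :
    Antitone (limApprox T) :=
  fun _ _ h x hx => hT _ _ (res_prefix x h) hx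

lemma LimT_eq_iInter_limApprox (T : Set FinSeq) : LimT T = ⋂ n, limApprox T n := by
  ext x
  simp [LimT, limApprox]

lemma measurableSet_LimT (T : Set FinSeq) : MeasurableSet (LimT T) := by
  rw [LimT_eq_iInter_limApprox]
  exact MeasurableSet.iInter (measurableSet_limApprox T)

lemma measure_eq_sum_inter_cyl (μ : Measure Cantor) {T : Set FinSeq} {n : ℕ} {A : Set Cantor}
    (hA : MeasurableSet A) (hAT : A ⊆ limApprox T n) :
    μ A = ∑ σ ∈ (finite_level T n).toFinset, μ (A ∩ cyl σ) := by
  rw [← measure_biUnion_finset (fun σ hσ τ hτ hne => ?_)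
    (fun σ _ => hA.inter (measurableSet_cyl σ)), ← Set.inter_iUnion₂]
  · rw [limApprox_eq_biUnion] at hAT
    congr
    simpa only [Set.Finite.mem_toFinset, Set.left_eq_inter] using hAT
  · simp only [Set.Finite.coe_toFinset, Set.mem_ofPred_eq] at hσ hτ
    exact (disjoint_cyl (hσ.2.trans hτ.2.symm) hne).mono Set.inter_subset_right
      Set.inter_subset_right

lemma muC_limApprox (T : Set FinSeq) (n : ℕ) :
    μC (limApprox T n) = (finite_level T n).toFinset.card * (2 : ℝ≥0∞)⁻¹ ^ n := by
  rw [measure_eq_sum_inter_cyl μC (measurableSet_limApprox T n) subset_rfl,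
    Finset.sum_congr rfl fun σ hσ => ?_, Finset.sum_const, nsmul_eq_mul]
  obtain ⟨hσT, rfl⟩ := (finite_level T n).mem_toFinset.mp hσ
  have hsub : cyl σ ⊆ limApprox T σ.length := fun x (hx : res x _ = σ) =>
    show res x σ.length ∈ T by rwa [hx]
  rw [Set.inter_eq_right.mpr hsub, muC_cyl]

lemma tendsto_measure_limApprox (μ : Measure Cantor) [IsFiniteMeasure μ] {T : Set FinSeq}
    (hT : ∀ σ τ : FinSeq, σ <+: τ → τ ∈ T → σ ∈ T) :
    Filter.Tendsto (fun n => μ (limApprox T n)) Filter.atTop (nhds (μ (LimT T))) := by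
  rw [LimT_eq_iInter_limApprox]
  exact tendsto_measure_iInter_atTop (fun n => (measurableSet_limApprox T n).nullMeasurableSet)
    (antitone_limApprox hT) ⟨0, measure_ne_top μ _⟩

lemma LimT_through (T : Set FinSeq) (η : FinSeq) :
    LimT (through T η) = LimT T ∩ cyl η := by
  ext x
  constructor
  · intro hx
    refine ⟨fun n => (hx n).1, ?_⟩
    rcases (hx η.length).2 with h | h
    · exact h.eq_of_length (res_length x η.length)
    · exact (h.eq_of_length (res_length x η.length).symm).symm
  · rintro ⟨hxT, hxη⟩ n
    refine ⟨hxT n, ?_⟩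
    rcases le_or_gt n η.length with h | h
    · exact .inl (hxη ▸ res_prefix x h)
    · exact .inr (hxη ▸ res_prefix x h.le)

theorem Finset.sum_sub_le_card_filter_mul {ι : Type*} (s : Finset ι) (m : ι → ℝ≥0∞)
    {q ε : ℝ≥0∞} (hq : q ≠ ⊤) (hε : ε ≠ 0) (hε_top : ε ≠ ⊤) (hε1 : ε ≤ 1)
    (hm : ∀ i ∈ s, m i ≤ q) (hs : s.card * q < ∑ i ∈ s, m i + ε * ε) :
    ∑ i ∈ s, m i - ε ≤ (s.filter fun i => q * (1 - ε) < m i).card * q := by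
  set bad := s.filter fun i => ¬ q * (1 - ε) < m i
  have hsum_le : ∑ i ∈ s, m i ≤ s.card * q :=
    (Finset.sum_le_card_nsmul s m q hm).trans_eq (nsmul_eq_mul _ _)
  have hdeficit : ∀ i ∈ bad, q * ε ≤ q - m i := by
    intro i hi
    calc q * ε = q * (1 - (1 - ε)) := by rw [ENNReal.sub_sub_cancel ENNReal.one_ne_top hε1]
      _ = q - q * (1 - ε) := by rw [ENNReal.mul_sub fun _ _ => hq, mul_one]
      _ ≤ q - m i := tsub_le_tsub_left (not_lt.mp (Finset.mem_filter.mp hi).2) q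
  have hbad : bad.card * q * ε < ε * ε :=
    calc bad.card * q * ε = bad.card • (q * ε) := by rw [nsmul_eq_mul, mul_assoc]
      _ ≤ ∑ i ∈ bad, (q - m i) := Finset.card_nsmul_le_sum _ _ _ hdeficit
      _ ≤ ∑ i ∈ s, (q - m i) := Finset.sum_le_sum_of_subset (Finset.filter_subset _ _)
      _ ≤ s.card * q - ∑ i ∈ s, m i := by
          refine ENNReal.le_sub_of_add_le_right (hsum_le.trans_lt ?_).ne ?_
          · exact ENNReal.mul_lt_top (ENNReal.natCast_lt_top _) hq.lt_top
          rw [← Finset.sum_add_distrib,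
            Finset.sum_congr rfl fun i hi => tsub_add_cancel_of_le (hm i hi), Finset.sum_const,
            nsmul_eq_mul]
      _ < ε * ε := ENNReal.sub_lt_of_lt_add hsum_le (by rwa [add_comm])
  rw [tsub_le_iff_right]
  calc ∑ i ∈ s, m i ≤ s.card * q := hsum_le
    _ = (s.filter fun i => q * (1 - ε) < m i).card * q + bad.card * q := by
        rw [← add_mul, ← Nat.cast_add, Finset.card_filter_add_card_filter_not]
    _ ≤ _ := by gcongr; exact ((ENNReal.mul_lt_mul_iff_left hε hε_top).mp hbad).le

theorem stmt10_general (T : Set FinSeq) (hT : IsTree T) (a : ENNReal)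
    (ha : μC (LimT T) = a) (ε : ENNReal) (hε : 0 < ε) :
    ∃ N : ℕ, ∀ n, N ≤ n → ∃ t : Set FinSeq,
      t ⊆ {τ ∈ T | τ.length = n} ∧
      (2 : ENNReal) ^ n * (a - ε) ≤ t.ncard ∧
      ∀ η ∈ t, (2 : ENNReal)⁻¹ ^ n * (1 - ε) < μC (LimT (through T η)) := by
  rcases le_or_gt a ε with haε | hεa
  · exact ⟨0, fun n _ => ⟨∅, by simp, by simp [tsub_eq_zero_of_le haε], by simp⟩⟩
  have hε1 : ε ≤ 1 := hεa.le.trans (ha ▸ prob_le_one)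
  have hlim := tendsto_measure_limApprox μC hT.2.1
  rw [ha] at hlim
  obtain ⟨N, hN⟩ := Filter.eventually_atTop.mp <| hlim.eventually_lt_const <|
    ENNReal.lt_add_right (ha ▸ measure_ne_top μC _) (mul_ne_zero hε.ne' hε.ne')
  refine ⟨N, fun n hn => ?_⟩
  set s := (finite_level T n).toFinset
  have hsum : ∑ σ ∈ s, μC (LimT T ∩ cyl σ) = a :=
    ha ▸ (measure_eq_sum_inter_cyl μC (measurableSet_LimT T) fun x hx => hx n).symm
  have hcyl : ∀ σ ∈ s, μC (LimT T ∩ cyl σ) ≤ (2 : ℝ≥0∞)⁻¹ ^ n := fun σ hσ =>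
    (measure_mono Set.inter_subset_right).trans_eq <| by
      rw [muC_cyl, ((finite_level T n).mem_toFinset.mp hσ).2]
  have hcount := s.sum_sub_le_card_filter_mul _ (by simp) hε.ne' (ne_top_of_le_ne_top
    ENNReal.one_ne_top hε1) hε1 hcyl (by rw [hsum, ← muC_limApprox]; exact hN n hn)
  rw [hsum] at hcount
  refine ⟨s.filter fun σ => (2 : ℝ≥0∞)⁻¹ ^ n * (1 - ε) < μC (LimT T ∩ cyl σ), ?_, ?_, ?_⟩
  · exact fun σ hσ => (finite_level T n).mem_toFinset.mp (Finset.mem_filter.mp hσ).1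
  · rw [Set.ncard_coe_finset]
    calc (2 : ℝ≥0∞) ^ n * (a - ε) ≤ 2 ^ n * (_ * 2⁻¹ ^ n) := by gcongr
      _ = _ := by rw [mul_left_comm, ← mul_pow, ENNReal.mul_inv_cancel two_ne_zero
        ENNReal.ofNat_ne_top, one_pow, mul_one]
  · intro η hη
    rw [LimT_through]
    exact (Finset.mem_filter.mp hη).2

/-- Lemma A. -/
theorem stmt10 (T : Set FinSeq) (hT : IsTree T) (a : ENNReal)
    (ha : μC (LimT T) = a) (h0 : 0 < a) (ε : ENNReal) (hε : 0 < ε) :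
    ∃ N : ℕ, ∀ n, N ≤ n → ∃ t : Set FinSeq,
      t ⊆ {τ ∈ T | τ.length = n} ∧
      (2 : ENNReal) ^ n * (a - ε) ≤ t.ncard ∧
      ∀ η ∈ t, (2 : ENNReal)⁻¹ ^ n * (1 - ε) < μC (LimT (through T η)) :=
  stmt10_general T hT a ha ε hε
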